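/- Let T be a triangulated category with arbitrary small coproducts and S = {E_α : α ∈ A} a set of compact objects of T. Then the smallest cocomplete pre-aisle U of T containing all objects of S is an aisle: (U, U^⊥[1]) is a t-structure on T. -/

import Mathlib

open CategoryTheory Category Limits Pretriangulated

universe v u

namespace Paper

section Preadditive

variable {C : Type u} [Category.{v} C] [Preadditive C]

/-- An object `E` is compact if `Hom_C(E, -)` commutes with small coproducts:
every map from `E` to a coproduct factors through a finite subcoproduct
(since the comparison map `⨁ᵢ Hom(E, Xᵢ) ⟶ Hom(E, ∐ᵢ Xᵢ)` is always injective,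
this is equivalent to the usual definition). -/
def IsCompactObj (E : C) : Prop :=
  ∀ ⦃ι : Type v⦄ (X : ι → C) [HasCoproduct X] (f : E ⟶ ∐ X),
    ∃ (s : Finset ι) (g : ∀ i, E ⟶ X i), f = ∑ i ∈ s, g i ≫ Sigma.ι X i

end Preadditive

section Category

variable {C : Type u} [Category.{v} C] [Preadditive C]

/-- The right orthogonal `U^⊥` of a (full) subcategory `U`, given by the objects `Y`
such that `Hom(X, Y) = 0` for every `X` in `U`. -/
def rightPerp (U : C → Prop) : C → Prop := fun Y => ∀ ⦃X : C⦄, U X → ∀ (f : X ⟶ Y), f = 0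

end Category

section Triangulated

variable {C : Type u} [Category.{v} C] [Preadditive C] [HasZeroObject C] [HasShift C ℤ]
  [∀ (n : ℤ), (shiftFunctor C n).Additive] [Pretriangulated C]

/-- A t-structure on a (pre)triangulated category, given as a pair of full subcategories
`(T^{≤0}, T^{≥0})` (as predicates on objects, closed under isomorphisms) satisfying the
axioms (t1), (t2), (t3) of Beilinson-Bernstein-Deligne.
Note that `Y ∈ T^{≥0}[-1]` is expressed as `Ge (Y⟦(1 : ℤ)⟧)` and
`X ∈ T^{≥0}[1]` as `Ge (X⟦(-1 : ℤ)⟧)`. -/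
structure IsTStructure (Le Ge : C → Prop) : Prop where
  le_iso : ∀ {X Y : C}, (X ≅ Y) → Le X → Le Y
  ge_iso : ∀ {X Y : C}, (X ≅ Y) → Ge X → Ge Y
  /-- (t1) : `Hom(X, Y) = 0` when `X ∈ T^{≤0}` and `Y ∈ T^{≥0}[-1]` -/
  hom_zero : ∀ {X Y : C}, Le X → Ge (Y⟦(1 : ℤ)⟧) → ∀ (f : X ⟶ Y), f = 0
  /-- (t2) : `T^{≤0}[1] ⊆ T^{≤0}` -/
  le_shift : ∀ (X : C), Le X → Le (X⟦(1 : ℤ)⟧)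
  /-- (t2) : `T^{≥0} ⊆ T^{≥0}[1]` -/
  ge_shift : ∀ (X : C), Ge X → Ge (X⟦(-1 : ℤ)⟧)
  /-- (t3) : every object `X` fits in a distinguished triangle `A ⟶ X ⟶ B ⟶ A[1]`
  with `A ∈ T^{≤0}` and `B ∈ T^{≥0}[-1]`. -/
  exists_triangle : ∀ (X : C), ∃ (A B : C) (f : A ⟶ X) (g : X ⟶ B) (h : B ⟶ A⟦(1 : ℤ)⟧),
    (Triangle.mk f g h ∈ distTriang C) ∧ Le A ∧ Ge (B⟦(1 : ℤ)⟧)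

/-- A pre-aisle: a full subcategory (predicate on objects, closed under isomorphisms)
stable under the shift `X ↦ X[1]` and under extensions. -/
structure IsPreAisle (U : C → Prop) : Prop where
  iso : ∀ {X Y : C}, (X ≅ Y) → U X → U Y
  shift : ∀ (X : C), U X → U (X⟦(1 : ℤ)⟧)
  ext : ∀ (T : Triangle C), (T ∈ distTriang C) → U T.obj₁ → U T.obj₃ → U T.obj₂

/-- A cocomplete pre-aisle: a pre-aisle closed under all existing small coproducts. -/
structure IsCocompletePreAisle (U : C → Prop) extends IsPreAisle U : Prop where
  coproduct : ∀ ⦃ι : Type v⦄ (X : ι → C) [HasCoproduct X], (∀ i, U (X i)) → U (∐ X)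

/-- The smallest cocomplete pre-aisle containing a given family `S` of objects:
the intersection of all cocomplete pre-aisles containing `S`. -/
def smallestCocompletePreAisle (S : C → Prop) : C → Prop :=
  fun X => ∀ (U : C → Prop), IsCocompletePreAisle U → (∀ Y, S Y → U Y) → U X

/-- `U` is an aisle if `(U, U^⊥[1])` is a t-structure; membership of `Y` in `U^⊥[1]`
is expressed as `Y⟦-1⟧ ∈ U^⊥`. -/
def IsAisle (U : C → Prop) : Prop :=
  IsTStructure U (fun Y => rightPerp U (Y⟦(-1 : ℤ)⟧))

/-- `E` is a generator of the triangulated category `C`: any object receiving only zero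
maps from all shifts of `E` is zero. -/
def IsGeneratorObj (E : C) : Prop :=
  ∀ (M : C), (∀ (n : ℤ) (f : E⟦n⟧ ⟶ M), f = 0) → IsZero M

end Triangulated

/-!
Fix `X`. Build a tower `Y₀ → Y₁ → ⋯` of objects over `X` inside `U`: `Y₀` is the coproduct of
all maps `E_α[n] → X` (`n ≥ 0`), and `Y_{k+1}` is the cone of the coproduct of all maps
`E_α[n] → Y_k[1]` that vanish in `X[1]`, so that these maps die in `Y_{k+1}[1]`. The homotopy
colimit `A` of the tower lies in `U` (an extension of coproducts), and the tower maps induce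
`A → X`, completed to a triangle `A → X → B → A[1]`. As the `E_α[n]` are compact, every map
`E_α[n] → A[1]` factors through some `Y_k[1]`; hence `Hom(E_α[n], A[1]) → Hom(E_α[n], X[1])` is
injective, while `Hom(E_α[n], A) → Hom(E_α[n], X)` is surjective already at `Y₀`, and so
`Hom(E_α[n], B) = 0`. The objects `Z` with `Hom(Z[n], B) = 0` for all `n ≥ 0` form a cocomplete
pre-aisle containing `S`, so `B ∈ U^⊥`.
-/

section Preadditive

variable {C : Type u} [Category.{v} C] [Preadditive C]

lemma rightPerp_of_iso {U : C → Prop} {Y Y' : C} (e : Y ≅ Y') (hY : rightPerp U Y) :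
    rightPerp U Y' := fun _ hX f => by
  rw [← Preadditive.IsIso.comp_right_eq_zero f e.inv]
  exact hY hX _

lemma IsCompactObj.obj_of_adjunction {D : Type*} [Category.{v} D] [Preadditive D]
    [HasCoproducts.{v} C] {L : C ⥤ D} {R : D ⥤ C} (adj : L ⊣ R) [R.Additive]
    [PreservesColimitsOfSize.{v, v} R] {E : C} (hE : IsCompactObj E) :
    IsCompactObj (L.obj E) := by
  intro ι X _ f
  obtain ⟨s, g, hg⟩ := hE (fun i => R.obj (X i))
    (adj.homEquiv _ _ f ≫ inv (sigmaComparison R X))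
  refine ⟨s, fun i => (adj.homEquiv _ _).symm (g i), (adj.homEquiv _ _).injective ?_⟩
  rw [(IsIso.comp_inv_eq _).mp hg, Adjunction.homEquiv_apply, Functor.map_sum]
  simp only [Preadditive.sum_comp, Preadditive.comp_sum, assoc, ι_comp_sigmaComparison,
    Functor.map_comp]
  refine Finset.sum_congr rfl fun i _ => ?_
  rw [← assoc, ← Adjunction.homEquiv_unit, Equiv.apply_symm_apply]

lemma IsCompactObj.shift [HasCoproducts.{v} C] [HasShift C ℤ]
    [∀ (n : ℤ), (shiftFunctor C n).Additive] {E : C} (hE : IsCompactObj E) (n : ℤ) :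
    IsCompactObj (E⟦n⟧) :=
  hE.obj_of_adjunction
    (show shiftFunctor C n ⊣ shiftFunctor C (-n) from (shiftEquiv C n).toAdjunction)

lemma IsCompactObj.eq_zero_of_comp_π_eq_zero {c : C} (hc : IsCompactObj c) {ι : Type v}
    [DecidableEq ι] {X : ι → C} [HasCoproduct X] {v : c ⟶ ∐ X}
    (hv : ∀ i, v ≫ Sigma.π X i = 0) : v = 0 := by
  obtain ⟨s, g, rfl⟩ := hc X v
  refine Finset.sum_eq_zero fun i hi => ?_
  have hgi := hv i
  rw [Preadditive.sum_comp, Finset.sum_eq_single_of_mem i hi fun j _ hj => by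
    rw [assoc, Sigma.ι_π_of_ne X hj, comp_zero], assoc, Sigma.ι_π_eq_id, comp_id] at hgi
  rw [hgi, zero_comp]

end Preadditive

section Sequence

variable {C : Type u} [Category.{v} C] [HasCoproducts.{v} C] (Y : ℕ → C)
  (f : ∀ k, Y k ⟶ Y (k + 1))

noncomputable abbrev seqSigma : C := ∐ fun k : ULift.{v} ℕ => Y k.down

noncomputable abbrev seqι (k : ℕ) : Y k ⟶ seqSigma Y :=
  Sigma.ι (fun k : ULift.{v} ℕ => Y k.down) ⟨k⟩

noncomputable def seqShift : seqSigma Y ⟶ seqSigma Y :=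
  Sigma.desc fun k => f k.down ≫ seqι Y (k.down + 1)

lemma seqι_seqShift (k : ℕ) : seqι Y k ≫ seqShift Y f = f k ≫ seqι Y (k + 1) :=
  Sigma.ι_desc _ _

end Sequence

section PreadditiveSequence

variable {C : Type u} [Category.{v} C] [Preadditive C] [HasCoproducts.{v} C] (Y : ℕ → C)
  (f : ∀ k, Y k ⟶ Y (k + 1))

noncomputable abbrev seqπ (k : ℕ) : seqSigma Y ⟶ Y k :=
  Sigma.π (fun k : ULift.{v} ℕ => Y k.down) ⟨k⟩

lemma seqShift_seqπ_zero : seqShift Y f ≫ seqπ Y 0 = 0 :=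
  Sigma.hom_ext _ _ fun k => by
    rw [← assoc, seqι_seqShift, assoc, Sigma.ι_π_of_ne _ (by simp), comp_zero, comp_zero]

lemma seqShift_seqπ_succ (k : ℕ) : seqShift Y f ≫ seqπ Y (k + 1) = seqπ Y k ≫ f k :=
  Sigma.hom_ext _ _ fun ⟨j⟩ => by
    rw [← assoc, seqι_seqShift, assoc, ← assoc (seqι Y j)]
    by_cases hjk : j = k
    · subst hjk
      rw [Sigma.ι_π_eq_id, Sigma.ι_π_eq_id, comp_id, id_comp]
    · rw [Sigma.ι_π_of_ne _ (by simpa using hjk), Sigma.ι_π_of_ne _ (by simpa using hjk),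
        comp_zero, zero_comp]

variable {Y f}

lemma eq_zero_of_comp_seqShift_eq {c : C} (hc : IsCompactObj c) {v : c ⟶ seqSigma Y}
    (hv : v ≫ seqShift Y f = v) : v = 0 := by
  have hvπ : ∀ k, v ≫ seqπ Y k = 0 := by
    intro k
    induction k with
    | zero => rw [← hv, assoc, seqShift_seqπ_zero, comp_zero]
    | succ k ih => rw [← hv, assoc, seqShift_seqπ_succ, ← assoc, ih, zero_comp]
  exact hc.eq_zero_of_comp_π_eq_zero fun k => hvπ k.down

end PreadditiveSequence

section Pretriangulated

variable {C : Type u} [Category.{v} C] [Preadditive C] [HasZeroObject C] [HasShift C ℤ]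
  [∀ (n : ℤ), (shiftFunctor C n).Additive] [Pretriangulated C]

lemma IsPreAisle.shift_nat {U : C → Prop} (hU : IsPreAisle U) {Z : C} (hZ : U Z) :
    ∀ n : ℕ, U (Z⟦(n : ℤ)⟧)
  | 0 => hU.iso ((shiftFunctorZero C ℤ).symm.app Z) hZ
  | n + 1 => hU.iso ((shiftFunctorAdd' C (n : ℤ) 1 _ (by push_cast; ring)).symm.app Z)
      (hU.shift _ (hU.shift_nat hZ n))

lemma IsPreAisle.rightPerp_shift_neg_one {U : C → Prop} (hU : IsPreAisle U) {Y : C}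
    (hY : rightPerp U Y) : rightPerp U (Y⟦(-1 : ℤ)⟧) := fun Z hZ f => by
  rw [← (shiftFunctor C (1 : ℤ)).map_eq_zero_iff,
    ← Preadditive.IsIso.comp_right_eq_zero _ ((shiftNegShift Y (1 : ℤ)).hom)]
  exact hY (hU.shift Z hZ) _

lemma IsPreAisle.isAisle_of_exists_triangle {U : C → Prop} (hU : IsPreAisle U)
    (h : ∀ X : C, ∃ (A B : C) (f : A ⟶ X) (g : X ⟶ B) (h : B ⟶ A⟦(1 : ℤ)⟧),
      Triangle.mk f g h ∈ distTriang C ∧ U A ∧ rightPerp U B) :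
    IsAisle U where
  le_iso := hU.iso
  ge_iso e := rightPerp_of_iso ((shiftFunctor C (-1 : ℤ)).mapIso e)
  hom_zero hX hY f := rightPerp_of_iso (shiftShiftNeg _ (1 : ℤ)) hY hX f
  le_shift := hU.shift
  ge_shift _ hX := hU.rightPerp_shift_neg_one hX
  exists_triangle X := by
    obtain ⟨A, B, f, g, h, hT, hA, hB⟩ := h X
    exact ⟨A, B, f, g, h, hT, hA, rightPerp_of_iso (shiftShiftNeg B (1 : ℤ)).symm hB⟩

lemma smallestCocompletePreAisle_isCocompletePreAisle (S : C → Prop) :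
    IsCocompletePreAisle (smallestCocompletePreAisle S) where
  iso e h U hU hS := hU.iso e (h U hU hS)
  shift X h U hU hS := hU.shift X (h U hU hS)
  ext T hT h₁ h₃ U hU hS := hU.ext T hT (h₁ U hU hS) (h₃ U hU hS)
  coproduct _ X _ h U hU hS := hU.coproduct X fun i => h i U hU hS

lemma Triangle.yoneda_exact₁ {T : Triangle C} (hT : T ∈ distTriang C) {X : C}
    (f : T.obj₁ ⟶ X) (hf : T.mor₃ ≫ f⟦(1 : ℤ)⟧' = 0) : ∃ g : T.obj₂ ⟶ X, T.mor₁ ≫ g = f := by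
  obtain ⟨g, hg, -⟩ := complete_distinguished_triangle_morphism₂ T _ hT
    (contractible_distinguished X) f 0 (hf.trans zero_comp.symm)
  exact ⟨g, hg.trans (comp_id f)⟩

lemma Triangle.hom_to_obj₃_eq_zero {A X B : C} {a : A ⟶ X} {b : X ⟶ B} {h : B ⟶ A⟦(1 : ℤ)⟧}
    (hT : Triangle.mk a b h ∈ distTriang C) {c : C}
    (ha : ∀ χ : c ⟶ X, ∃ χ' : c ⟶ A, χ = χ' ≫ a)
    (ha' : ∀ ψ : c ⟶ A⟦(1 : ℤ)⟧, ψ ≫ a⟦(1 : ℤ)⟧' = 0 → ψ = 0) (φ : c ⟶ B) : φ = 0 := by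
  have hha : h ≫ a⟦(1 : ℤ)⟧' = 0 := comp_distTriang_mor_zero₃₁ _ hT
  have hab : a ≫ b = 0 := comp_distTriang_mor_zero₁₂ _ hT
  have hφ : φ ≫ h = 0 := ha' _ (by rw [assoc, hha, comp_zero])
  obtain ⟨χ, rfl⟩ : ∃ χ : c ⟶ X, φ = χ ≫ b := Triangle.coyoneda_exact₃ _ hT φ hφ
  obtain ⟨χ', rfl⟩ := ha χ
  rw [assoc, hab, comp_zero]

end Pretriangulated

section Coproducts

variable {C : Type u} [Category.{v} C] [Preadditive C] [HasZeroObject C] [HasShift C ℤ]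
  [∀ (n : ℤ), (shiftFunctor C n).Additive] [Pretriangulated C] [HasCoproducts.{v} C]

lemma isCocompletePreAisle_shift_hom_eq_zero (B : C) :
    IsCocompletePreAisle fun Z : C => ∀ (n : ℕ) (φ : Z⟦(n : ℤ)⟧ ⟶ B), φ = 0 where
  iso e hZ n φ := by
    rw [← Preadditive.IsIso.comp_left_eq_zero ((shiftFunctor C (n : ℤ)).map e.hom)]
    exact hZ n _
  shift Z hZ n φ := by
    rw [← Preadditive.IsIso.comp_left_eq_zero
      ((shiftFunctorAdd' C 1 (n : ℤ) ((n + 1 : ℕ) : ℤ) (by push_cast; ring)).hom.app Z)]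
    exact hZ (n + 1) _
  ext T hT h₁ h₃ n φ := by
    obtain ⟨g, rfl⟩ := Triangle.yoneda_exact₂ _ (T.shift_distinguished hT n) φ (h₁ n _)
    rw [h₃ n g]
    exact comp_zero
  coproduct _ X _ hX n φ := by
    rw [← Preadditive.IsIso.comp_left_eq_zero (sigmaComparison (shiftFunctor C (n : ℤ)) X)]
    refine Sigma.hom_ext _ _ fun i => ?_
    rw [ι_comp_sigmaComparison_assoc, comp_zero]
    exact hX i n _

lemma rightPerp_smallestCocompletePreAisle {S : C → Prop} {B : C}
    (hB : ∀ Y, S Y → ∀ (n : ℕ) (φ : Y⟦(n : ℤ)⟧ ⟶ B), φ = 0) :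
    rightPerp (smallestCocompletePreAisle S) B := fun Z hZ φ => by
  rw [← Preadditive.IsIso.comp_left_eq_zero ((shiftFunctorZero C ℤ).hom.app Z)]
  exact hZ _ (isCocompletePreAisle_shift_hom_eq_zero B) hB 0 _

def IsHomotopyColimit (Y : ℕ → C) (f : ∀ k, Y k ⟶ Y (k + 1)) {H : C} (p : seqSigma Y ⟶ H)
    (δ : H ⟶ (seqSigma Y)⟦(1 : ℤ)⟧) : Prop :=
  Triangle.mk (𝟙 _ - seqShift Y f) p δ ∈ distTriang C

namespace IsHomotopyColimit

variable {Y : ℕ → C} {f : ∀ k, Y k ⟶ Y (k + 1)} {H : C} {p : seqSigma Y ⟶ H}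
  {δ : H ⟶ (seqSigma Y)⟦(1 : ℤ)⟧}

lemma seqι_comp_eq (hT : IsHomotopyColimit Y f p δ) (k : ℕ) :
    seqι Y k ≫ p = f k ≫ seqι Y (k + 1) ≫ p := by
  have hp : (𝟙 _ - seqShift Y f) ≫ p = 0 := comp_distTriang_mor_zero₁₂ _ hT
  rw [Preadditive.sub_comp, id_comp, sub_eq_zero] at hp
  rw [← assoc, ← seqι_seqShift, assoc, ← hp]

lemma exists_seqι_comp_eq_of_le (hT : IsHomotopyColimit Y f p δ) {i N : ℕ} (hiN : i ≤ N) :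
    ∃ t : Y i ⟶ Y N, seqι Y i ≫ p = t ≫ seqι Y N ≫ p := by
  induction N, hiN using Nat.le_induction with
  | base => exact ⟨𝟙 _, (id_comp _).symm⟩
  | succ N _ ih =>
    obtain ⟨t, ht⟩ := ih
    exact ⟨t ≫ f N, by rw [ht, hT.seqι_comp_eq, assoc]⟩

lemma exists_desc (hT : IsHomotopyColimit Y f p δ) {X : C} (π : ∀ k, Y k ⟶ X)
    (hπ : ∀ k, f k ≫ π (k + 1) = π k) : ∃ a : H ⟶ X, ∀ k, seqι Y k ≫ p ≫ a = π k := by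
  have hπ' : (𝟙 _ - seqShift Y f) ≫ Sigma.desc (fun k : ULift.{v} ℕ => π k.down) = 0 :=
    Sigma.hom_ext _ _ fun ⟨k⟩ => by
      rw [Preadditive.sub_comp, Preadditive.comp_sub, id_comp, ← assoc, seqι_seqShift, assoc]
      simp [hπ]
  obtain ⟨a, ha⟩ : ∃ a : H ⟶ X, Sigma.desc (fun k : ULift.{v} ℕ => π k.down) = p ≫ a :=
    Triangle.yoneda_exact₂ _ hT _ hπ'
  exact ⟨a, fun k => by rw [← ha]; simp⟩

lemma comp_δ_eq_zero (hT : IsHomotopyColimit Y f p δ) {c : C} (hc : IsCompactObj c)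
    (ρ : c ⟶ H) : ρ ≫ δ = 0 := by
  have hδ : δ ≫ (𝟙 _ - seqShift Y f)⟦(1 : ℤ)⟧' = 0 := comp_distTriang_mor_zero₃₁ _ hT
  -- `ρ ≫ δ` is killed by `(1 - seqShift)⟦1⟧`; shift it back to a map out of the compact `c⟦-1⟧`.
  have hnat : (shiftShiftNeg _ (1 : ℤ)).hom ≫ (𝟙 _ - seqShift Y f) =
      (𝟙 _ - seqShift Y f)⟦(1 : ℤ)⟧'⟦(-1 : ℤ)⟧' ≫ (shiftShiftNeg _ (1 : ℤ)).hom :=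
    ((shiftEquiv C (1 : ℤ)).unitIso.inv.naturality _).symm
  have hv : ((ρ ≫ δ)⟦(-1 : ℤ)⟧' ≫ (shiftShiftNeg _ (1 : ℤ)).hom) ≫ (𝟙 _ - seqShift Y f) = 0 := by
    rw [assoc, hnat, ← assoc, ← Functor.map_comp, assoc, hδ, comp_zero, Functor.map_zero,
      zero_comp]
  rw [Preadditive.comp_sub, comp_id, sub_eq_zero] at hv
  have hv0 := eq_zero_of_comp_seqShift_eq (hc.shift (-1)) hv.symm
  rwa [Preadditive.IsIso.comp_right_eq_zero, Functor.map_eq_zero_iff] at hv0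

lemma exists_eq_comp_seqι_comp (hT : IsHomotopyColimit Y f p δ) {c : C} (hc : IsCompactObj c)
    (ρ : c ⟶ H) : ∃ (N : ℕ) (ρ' : c ⟶ Y N), ρ = ρ' ≫ seqι Y N ≫ p := by
  obtain ⟨u, rfl⟩ : ∃ u : c ⟶ seqSigma Y, ρ = u ≫ p :=
    Triangle.coyoneda_exact₃ _ hT ρ (hT.comp_δ_eq_zero hc ρ)
  obtain ⟨s, g, rfl⟩ := hc _ u
  rw [Preadditive.sum_comp]
  refine Finset.sum_induction _ (fun ρ => ∃ (N : ℕ) (ρ' : c ⟶ Y N), ρ = ρ' ≫ seqι Y N ≫ p)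
    ?_ ⟨0, 0, zero_comp.symm⟩ fun i _ => ⟨i.down, g i, assoc _ _ _⟩
  rintro _ _ ⟨N₁, ρ₁, rfl⟩ ⟨N₂, ρ₂, rfl⟩
  obtain ⟨t₁, ht₁⟩ := hT.exists_seqι_comp_eq_of_le (le_max_left N₁ N₂)
  obtain ⟨t₂, ht₂⟩ := hT.exists_seqι_comp_eq_of_le (le_max_right N₁ N₂)
  exact ⟨max N₁ N₂, ρ₁ ≫ t₁ + ρ₂ ≫ t₂, by rw [ht₁, ht₂, Preadditive.add_comp, assoc, assoc]⟩

lemma exists_eq_comp_shift_seqι_comp (hT : IsHomotopyColimit Y f p δ) {c : C}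
    (hc : IsCompactObj c) (ψ : c ⟶ H⟦(1 : ℤ)⟧) :
    ∃ (N : ℕ) (ψ' : c ⟶ (Y N)⟦(1 : ℤ)⟧), ψ = ψ' ≫ (seqι Y N ≫ p)⟦(1 : ℤ)⟧' := by
  let e := shiftNegShift c (1 : ℤ)
  obtain ⟨N, ρ', hρ'⟩ := hT.exists_eq_comp_seqι_comp (hc.shift (-1))
    ((shiftFunctor C (1 : ℤ)).preimage (e.hom ≫ ψ))
  refine ⟨N, e.inv ≫ ρ'⟦(1 : ℤ)⟧', ?_⟩
  rw [assoc, ← Functor.map_comp, ← hρ', Functor.map_preimage, Iso.inv_hom_id_assoc]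

end IsHomotopyColimit

variable {I : Type v} (F : I → C) {X : C}

abbrev KillIndex (s : Over X) : Type v :=
  Σ i, {ψ : F i ⟶ s.left⟦(1 : ℤ)⟧ // ψ ≫ s.hom⟦(1 : ℤ)⟧' = 0}

noncomputable def killMap (s : Over X) : (∐ fun j : KillIndex F s => F j.1) ⟶ s.left⟦(1 : ℤ)⟧ :=
  Sigma.desc fun j => j.2.1

lemma exists_killStage (s : Over X) :
    ∃ (t : Over X) (g : s ⟶ t) (w : t.left ⟶ ∐ fun j : KillIndex F s => F j.1),
      Triangle.mk g.left w (killMap F s) ∈ distTriang C := by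
  obtain ⟨Z, g, w, hT⟩ := distinguished_cocone_triangle₂ (killMap F s)
  have hk : killMap F s ≫ s.hom⟦(1 : ℤ)⟧' = 0 :=
    Sigma.hom_ext _ _ fun j => by rw [killMap, Sigma.ι_desc_assoc, comp_zero, j.2.2]
  obtain ⟨π, hπ⟩ := Triangle.yoneda_exact₁ hT s.hom hk
  exact ⟨Over.mk π, Over.homMk g hπ, w, hT⟩

noncomputable def killStage (s : Over X) : Over X :=
  (exists_killStage F s).choose

noncomputable def toKillStage (s : Over X) : s ⟶ killStage F s :=
  (exists_killStage F s).choose_spec.choose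

lemma killStage_distinguished (s : Over X) :
    ∃ w : (killStage F s).left ⟶ ∐ fun j : KillIndex F s => F j.1,
      Triangle.mk (toKillStage F s).left w (killMap F s) ∈ distTriang C :=
  (exists_killStage F s).choose_spec.choose_spec

lemma comp_toKillStage_eq_zero (s : Over X) {i : I} (ψ : F i ⟶ s.left⟦(1 : ℤ)⟧)
    (hψ : ψ ≫ s.hom⟦(1 : ℤ)⟧' = 0) : ψ ≫ (toKillStage F s).left⟦(1 : ℤ)⟧' = 0 := by
  have hψ' : ψ = Sigma.ι (fun j : KillIndex F s => F j.1) ⟨i, ψ, hψ⟩ ≫ killMap F s := by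
    rw [killMap, Sigma.ι_desc]
  obtain ⟨w, hT⟩ := killStage_distinguished F s
  have h₃₁ : killMap F s ≫ (toKillStage F s).left⟦(1 : ℤ)⟧' = 0 :=
    comp_distTriang_mor_zero₃₁ _ hT
  rw [hψ', assoc, h₃₁, comp_zero]

lemma killStage_mem {U : C → Prop} (hU : IsCocompletePreAisle U) (hF : ∀ i, U (F i))
    {s : Over X} (hs : U s.left) : U (killStage F s).left :=
  have ⟨_, hT⟩ := killStage_distinguished F s
  hU.ext _ hT hs (hU.coproduct _ fun j => hF j.1)

variable (X) in
noncomputable def killTower : ℕ → Over X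
  | 0 => Over.mk (Sigma.desc fun j : Σ i, F i ⟶ X => j.2)
  | k + 1 => killStage F (killTower k)

lemma exists_comp_killTower_zero_hom {i : I} (χ : F i ⟶ X) :
    ∃ χ₀ : F i ⟶ (killTower F X 0).left, χ₀ ≫ (killTower F X 0).hom = χ :=
  ⟨Sigma.ι (fun j : Σ i, F i ⟶ X => F j.1) ⟨i, χ⟩, Sigma.ι_desc _ _⟩

lemma killTower_mem {U : C → Prop} (hU : IsCocompletePreAisle U) (hF : ∀ i, U (F i)) :
    ∀ k, U (killTower F X k).left
  | 0 => hU.coproduct _ fun j => hF j.1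
  | k + 1 => killStage_mem F hU hF (killTower_mem hU hF k)

theorem exists_distTriang_of_isCompactObj (hFc : ∀ i, IsCompactObj (F i)) {U : C → Prop}
    (hU : IsCocompletePreAisle U) (hF : ∀ i, U (F i)) (X : C) :
    ∃ (A B : C) (a : A ⟶ X) (b : X ⟶ B) (h : B ⟶ A⟦(1 : ℤ)⟧),
      Triangle.mk a b h ∈ distTriang C ∧ U A ∧ ∀ i (φ : F i ⟶ B), φ = 0 := by
  let Y k := (killTower F X k).left
  let f k : Y k ⟶ Y (k + 1) := (toKillStage F (killTower F X k)).left
  obtain ⟨H, p, δ, hT⟩ := distinguished_cocone_triangle (𝟙 (seqSigma Y) - seqShift Y f)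
  obtain ⟨a, ha⟩ := IsHomotopyColimit.exists_desc hT (fun k => (killTower F X k).hom)
    fun k => Over.w (toKillStage F (killTower F X k))
  obtain ⟨B, b, h, hB⟩ := distinguished_cocone_triangle a
  have hYU : U (seqSigma Y) := hU.coproduct _ fun k => killTower_mem F hU hF k.down
  refine ⟨H, B, a, b, h, hB, hU.ext _ (rot_of_distTriang _ hT) hYU (hU.shift _ hYU),
    fun i φ => Triangle.hom_to_obj₃_eq_zero hB ?_ ?_ φ⟩
  · intro χ
    obtain ⟨χ₀, hχ₀⟩ := exists_comp_killTower_zero_hom F χ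
    exact ⟨χ₀ ≫ seqι Y 0 ≫ p, by rw [assoc, assoc, ha 0, hχ₀]⟩
  · intro ψ hψ
    obtain ⟨N, ψ', rfl⟩ := IsHomotopyColimit.exists_eq_comp_shift_seqι_comp hT (hFc i) ψ
    have hψ' : ψ' ≫ (killTower F X N).hom⟦(1 : ℤ)⟧' = 0 := by
      rw [← ha N, ← assoc, Functor.map_comp, ← assoc]
      exact hψ
    have hkill : ψ' ≫ (f N)⟦(1 : ℤ)⟧' = 0 := comp_toKillStage_eq_zero F _ ψ' hψ'
    rw [IsHomotopyColimit.seqι_comp_eq hT N, Functor.map_comp, ← assoc, hkill, zero_comp]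

end Coproducts

/-- Let `T` be a triangulated category with small coproducts and
`S = {E_α : α ∈ A}` a set of compact objects of `T`. Then the smallest cocomplete pre-aisle `U`
of `T` containing `S` is an aisle: `(U, U^⊥[1])` is a t-structure on `T`. -/
theorem smallestCocompletePreAisle_isAisle_of_compact {C : Type u} [Category.{v} C] [Preadditive C] [HasZeroObject C] [HasShift C ℤ]
    [∀ (n : ℤ), (shiftFunctor C n).Additive] [Pretriangulated C]
    [HasCoproducts.{v} C]
    {A : Type v} (E : A → C) (hE : ∀ α, IsCompactObj (E α)) :
    IsAisle (smallestCocompletePreAisle (fun X => ∃ α, E α = X)) := by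
  set U := smallestCocompletePreAisle (fun X => ∃ α, E α = X)
  have hU : IsCocompletePreAisle U := smallestCocompletePreAisle_isCocompletePreAisle _
  have hEU : ∀ α, U (E α) := fun α _ _ hS => hS _ ⟨α, rfl⟩
  refine hU.isAisle_of_exists_triangle fun X => ?_
  obtain ⟨A', B, a, b, h, hT, hA', hB⟩ := exists_distTriang_of_isCompactObj
    (fun j : A × ULift.{v} ℕ => (E j.1)⟦(j.2.down : ℤ)⟧) (fun j => (hE j.1).shift _) hU
    (fun j => hU.shift_nat (hEU j.1) j.2.down) X
  refine ⟨A', B, a, b, h, hT, hA', rightPerp_smallestCocompletePreAisle ?_⟩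
  rintro _ ⟨α, rfl⟩ n
  exact hB (α, ⟨n⟩)

end Paper
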